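/- Let V be a finite set of unit vectors in ℂⁿ such that for all distinct v,w ∈ V, |⟨v,w⟩| ∈ {0, α} for some fixed real α with 0 < α < 1. Then |V| ≤ n·(n+1)/2·n, i.e., |V| ≤ n·binom(n+1,2). -/

import Mathlib

/-!
Each `w ∈ V` gives the function `g_w x = ⟪w, x⟫ (|⟪w, x⟫|² - α² ⟪x, x⟫)`, which vanishes at every
other point of `V` (there `⟪w, x⟫ = 0` or `|⟪w, x⟫| = α`) but not at `w` (where it is `1 - α²`).
Restricted to `V` these functions are therefore linearly independent, and they all lie in the
span of the monomials `x_i x_j conj(x_k)`, of which there are `n · binom(n+1, 2)`.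
-/

open scoped InnerProductSpace ComplexConjugate

section PolynomialMethod

variable {K E : Type*} [Field K]

theorem Finset.card_le_finrank_of_forall_exists_mem (W : Submodule K (E → K))
    [FiniteDimensional K W] (V : Finset E)
    (h : ∀ w ∈ V, ∃ f ∈ W, f w ≠ 0 ∧ ∀ v ∈ V, v ≠ w → f v = 0) :
    V.card ≤ Module.finrank K W := by
  classical
  let restrict := LinearMap.funLeft K K ((↑) : V → E)
  have htop : W.map restrict = ⊤ := by
    rw [eq_top_iff, ← (Pi.basisFun K V).span_eq, Submodule.span_le]
    rintro _ ⟨w, rfl⟩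
    obtain ⟨f, hfW, hfw, hf0⟩ := h w w.2
    refine ⟨(f w)⁻¹ • f, W.smul_mem _ hfW, funext fun v => ?_⟩
    rw [Pi.basisFun_apply]
    by_cases hvw : v = w
    · subst hvw
      simp [restrict, LinearMap.funLeft, hfw]
    · simp [restrict, LinearMap.funLeft, hvw, hf0 v v.2 (Subtype.coe_ne_coe.mpr hvw)]
  calc V.card = Module.finrank K (V → K) := by simp
    _ = Module.finrank K (W.map restrict) := by rw [htop, finrank_top]
    _ ≤ Module.finrank K W := Submodule.finrank_map_le restrict W

end PolynomialMethod

section CubicForms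

variable {𝕜 ι : Type*} [RCLike 𝕜]

/-- `cubicMonomial (s(i, j), k) x = x i * x j * conj (x k)`. -/
def cubicMonomial (p : Sym2 ι × ι) (x : EuclideanSpace 𝕜 ι) : 𝕜 :=
  Sym2.lift ⟨fun i j => x i * x j, fun _ _ => mul_comm _ _⟩ p.1 * conj (x p.2)

variable (𝕜 ι) in
def cubicForms : Submodule 𝕜 (EuclideanSpace 𝕜 ι → 𝕜) :=
  Submodule.span 𝕜 (Set.range cubicMonomial)

theorem cubicMonomial_mem_cubicForms (i j k : ι) :
    (fun x : EuclideanSpace 𝕜 ι => x i * x j * conj (x k)) ∈ cubicForms 𝕜 ι :=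
  Submodule.subset_span ⟨(s(i, j), k), rfl⟩

variable [Fintype ι]

instance : FiniteDimensional 𝕜 (cubicForms 𝕜 ι) :=
  FiniteDimensional.span_of_finite 𝕜 (Set.finite_range _)

theorem finrank_cubicForms_le :
    Module.finrank 𝕜 (cubicForms 𝕜 ι) ≤ Fintype.card ι * (Fintype.card ι + 1).choose 2 := by
  have := finrank_range_le_card (R := 𝕜) (cubicMonomial (𝕜 := 𝕜) (ι := ι))
  rwa [Fintype.card_prod, Sym2.card, mul_comm] at this

theorem EuclideanSpace.inner_eq_sum_conj_mul (w x : EuclideanSpace 𝕜 ι) :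
    ⟪w, x⟫_𝕜 = ∑ i, conj (w i) * x i := by
  simp only [PiLp.inner_apply, RCLike.inner_apply, mul_comm]

theorem inner_mul_inner_mul_conj_mem_cubicForms (w : EuclideanSpace 𝕜 ι) :
    (fun x => ⟪w, x⟫_𝕜 * ⟪w, x⟫_𝕜 * conj ⟪w, x⟫_𝕜) ∈ cubicForms 𝕜 ι := by
  have hexpand : (fun x => ⟪w, x⟫_𝕜 * ⟪w, x⟫_𝕜 * conj ⟪w, x⟫_𝕜) = ∑ i, ∑ j, ∑ k,
      (conj (w i) * conj (w j) * w k) • fun x : EuclideanSpace 𝕜 ι => x i * x j * conj (x k) := by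
    ext x
    simp only [EuclideanSpace.inner_eq_sum_conj_mul, map_sum, map_mul, RCLike.conj_conj,
      Finset.sum_apply, Pi.smul_apply, smul_eq_mul]
    rw [Finset.sum_mul_sum, Finset.sum_mul]
    refine Finset.sum_congr rfl fun i _ => ?_
    rw [Finset.sum_mul]
    refine Finset.sum_congr rfl fun j _ => ?_
    rw [Finset.mul_sum]
    exact Finset.sum_congr rfl fun k _ => by ring
  rw [hexpand]
  exact Submodule.sum_mem _ fun i _ => Submodule.sum_mem _ fun j _ =>
    Submodule.sum_mem _ fun k _ => Submodule.smul_mem _ _ (cubicMonomial_mem_cubicForms i j k)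

theorem inner_mul_inner_self_mem_cubicForms (w : EuclideanSpace 𝕜 ι) :
    (fun x => ⟪w, x⟫_𝕜 * ⟪x, x⟫_𝕜) ∈ cubicForms 𝕜 ι := by
  have hexpand : (fun x => ⟪w, x⟫_𝕜 * ⟪x, x⟫_𝕜) = ∑ i, ∑ j,
      conj (w i) • fun x : EuclideanSpace 𝕜 ι => x i * x j * conj (x j) := by
    ext x
    simp only [EuclideanSpace.inner_eq_sum_conj_mul, Finset.sum_mul_sum, Finset.sum_apply,
      Pi.smul_apply, smul_eq_mul]
    refine Finset.sum_congr rfl fun i _ => Finset.sum_congr rfl fun j _ => by ring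
  rw [hexpand]
  exact Submodule.sum_mem _ fun i _ => Submodule.sum_mem _ fun j _ =>
    Submodule.smul_mem _ _ (cubicMonomial_mem_cubicForms i j j)

end CubicForms

theorem card_le_of_norm_inner_eq_zero_or_eq {𝕜 ι : Type*} [RCLike 𝕜] [Fintype ι] (α : ℝ)
    (hα : α ^ 2 ≠ 1) (V : Finset (EuclideanSpace 𝕜 ι)) (hunit : ∀ v ∈ V, ‖v‖ = 1)
    (hangle : ∀ v ∈ V, ∀ w ∈ V, v ≠ w → ‖⟪v, w⟫_𝕜‖ = 0 ∨ ‖⟪v, w⟫_𝕜‖ = α) :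
    V.card ≤ Fintype.card ι * (Fintype.card ι + 1).choose 2 := by
  refine (V.card_le_finrank_of_forall_exists_mem (cubicForms 𝕜 ι) fun w hw => ?_).trans
    finrank_cubicForms_le
  have hself : ∀ v ∈ V, ⟪v, v⟫_𝕜 = 1 := fun v hv => by
    rw [inner_self_eq_norm_sq_to_K, hunit v hv]; norm_num
  refine ⟨fun x => ⟪w, x⟫_𝕜 * ⟪w, x⟫_𝕜 * conj ⟪w, x⟫_𝕜 - (α : 𝕜) ^ 2 * (⟪w, x⟫_𝕜 * ⟪x, x⟫_𝕜),
    sub_mem (inner_mul_inner_mul_conj_mem_cubicForms w)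
      (Submodule.smul_mem _ _ (inner_mul_inner_self_mem_cubicForms w)), ?_, fun v hv hvw => ?_⟩
  · show ⟪w, w⟫_𝕜 * ⟪w, w⟫_𝕜 * conj ⟪w, w⟫_𝕜 - (α : 𝕜) ^ 2 * (⟪w, w⟫_𝕜 * ⟪w, w⟫_𝕜) ≠ 0
    rw [hself w hw, map_one, mul_one, mul_one, mul_one, sub_ne_zero]
    exact_mod_cast hα.symm
  · simp only [mul_assoc, RCLike.mul_conj, hself v hv]
    rcases hangle w hw v hv (Ne.symm hvw) with h | h
    · rw [norm_eq_zero.mp h]; ring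
    · rw [h]; ring

theorem stmt_3 {n : ℕ} (α : ℝ) (hα : 0 < α) (hα1 : α < 1)
    (V : Finset (EuclideanSpace ℂ (Fin n)))
    (hunit : ∀ v ∈ V, ‖v‖ = 1)
    (hangle : ∀ v ∈ V, ∀ w ∈ V, v ≠ w →
      ‖(⟪v, w⟫_ℂ : ℂ)‖ = 0 ∨ ‖(⟪v, w⟫_ℂ : ℂ)‖ = α) :
    V.card ≤ n * Nat.choose (n + 1) 2 := by
  have hα2 : α ^ 2 ≠ 1 := (pow_lt_one₀ hα.le hα1 two_ne_zero).ne
  simpa using card_le_of_norm_inner_eq_zero_or_eq α hα2 V hunit hangle
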